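/- arXiv:1709.06149 — 3 statements merged into one kernel-verified Lean document; each statement's English description precedes it below -/
import Mathlib

section
/- Let G be a finite group and B = {b₁,…,bₙ} ⊆ G. Define the class function θ_B by θ_B(C) = |{(j,m) : bⱼ⁻¹bₘ ∈ C}| for each conjugacy class C, and let γ(g) be the size of the conjugacy class of g. Then for every irreducible character χ of G, the inner product ⟨χ, θ_B/γ⟩ = (1/|G|) ∑_{g∈G} χ̄(g) θ_B(g)/γ(g) is a nonnegative real number. -/
/-!
Summing `θ_B / γ` against a class function `f` collapses to `∑_{j,m} f (b_j⁻¹ b_m)`: the pair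
`(j, m)` is counted once for each of the `γ (b_j⁻¹ b_m)` elements of the class of `b_j⁻¹ b_m`.
For `f = χ̄` this is the conjugate of `∑_{j,m} χ (b_j⁻¹ b_m)`, which is nonnegative because
characters are positive-definite functions. Indeed, in matrix form the averaged Gram matrix
`Q = ∑_g ρ(g)ᴴ ρ(g)` is positive definite and invariant, so `ρ(g⁻¹) = Q⁻¹ ρ(g)ᴴ Q`, and with
`T = ∑_m ρ(b_m)` the sum becomes `tr (Q⁻¹ · Tᴴ Q T)`, the trace of a product of two positive
semidefinite matrices.
-/

open scoped ComplexOrder Classical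

open Matrix Finset

namespace Matrix

open scoped MatrixOrder in
lemma PosSemidef.trace_mul_nonneg {n 𝕜 : Type*} [Fintype n] [RCLike 𝕜] {A B : Matrix n n 𝕜}
    (hA : A.PosSemidef) (hB : B.PosSemidef) : 0 ≤ (A * B).trace := by
  obtain ⟨C, rfl⟩ := CStarAlgebra.nonneg_iff_eq_star_mul_self.mp hB.nonneg
  rw [star_eq_conjTranspose, ← Matrix.mul_assoc, trace_mul_cycle]
  exact (hA.mul_mul_conjTranspose_same C).trace_nonneg

end Matrix

def IsPosDefFun {G : Type*} [Group G] (φ : G → ℂ) : Prop :=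
  ∀ (s : Finset G) (c : G → ℂ), 0 ≤ ∑ x ∈ s, ∑ y ∈ s, star (c x) * c y * φ (x⁻¹ * y)

section AveragedGram

variable {G n : Type*} [Group G] [Fintype G] [Fintype n] [DecidableEq n] (ρ : G →* Matrix n n ℂ)

def averagedGram : Matrix n n ℂ := ∑ g, (ρ g)ᴴ * ρ g

lemma posDef_averagedGram : (averagedGram ρ).PosDef := by
  rw [averagedGram, ← Finset.add_sum_erase _ _ (Finset.mem_univ 1), map_one, conjTranspose_one,
    Matrix.mul_one]
  exact PosDef.one.add_posSemidef
    (posSemidef_sum _ fun g _ => posSemidef_conjTranspose_mul_self (ρ g))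

lemma conjTranspose_mul_averagedGram_mul (h : G) :
    (ρ h)ᴴ * averagedGram ρ * ρ h = averagedGram ρ := by
  calc (ρ h)ᴴ * averagedGram ρ * ρ h = ∑ g, (ρ (g * h))ᴴ * ρ (g * h) := by
        simp only [averagedGram, Finset.mul_sum, Finset.sum_mul, map_mul, conjTranspose_mul,
          Matrix.mul_assoc]
    _ = averagedGram ρ := Fintype.sum_equiv (Equiv.mulRight h) _ _ fun _ => rfl

lemma map_inv_eq_averagedGram_conj (h : G) :
    ρ h⁻¹ = (averagedGram ρ)⁻¹ * (ρ h)ᴴ * averagedGram ρ := by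
  have hQ : IsUnit (averagedGram ρ).det := (posDef_averagedGram ρ).isUnit.map detMonoidHom
  refine (left_inv_eq_right_inv (a := ρ h) ?_ ?_).symm
  · simp only [Matrix.mul_assoc]
    rw [← Matrix.mul_assoc (ρ h)ᴴ, conjTranspose_mul_averagedGram_mul,
      nonsing_inv_mul _ hQ]
  · rw [← map_mul, mul_inv_cancel, map_one]

lemma isPosDefFun_trace_comp : IsPosDefFun fun g => (ρ g).trace := by
  intro s c
  set Q := averagedGram ρ
  set T := ∑ y ∈ s, c y • ρ y
  have hsum : ∑ x ∈ s, star (c x) • ρ x⁻¹ = Q⁻¹ * Tᴴ * Q := by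
    simp only [Q, T, map_inv_eq_averagedGram_conj, conjTranspose_sum, conjTranspose_smul,
      Matrix.mul_sum, Matrix.sum_mul, Matrix.mul_smul, Matrix.smul_mul]
  calc 0 ≤ (Q⁻¹ * (Tᴴ * Q * T)).trace :=
        (posDef_averagedGram ρ).inv.posSemidef.trace_mul_nonneg
          ((posDef_averagedGram ρ).posSemidef.conjTranspose_mul_mul_same T)
    _ = ((∑ x ∈ s, star (c x) • ρ x⁻¹) * T).trace := by rw [hsum]; simp only [Matrix.mul_assoc]
    _ = _ := by
        rw [Finset.sum_mul_sum]
        simp only [trace_sum, Matrix.smul_mul, Matrix.mul_smul, trace_smul, ← map_mul, smul_eq_mul]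
        exact Finset.sum_congr rfl fun _ _ => Finset.sum_congr rfl fun _ _ => by ring

end AveragedGram

lemma Representation.isPosDefFun_character {G V : Type*} [Group G] [Fintype G] [AddCommGroup V]
    [Module ℂ V] [FiniteDimensional ℂ V] (ρ : Representation ℂ G V) :
    IsPosDefFun ρ.character := by
  let b := Module.finBasis ℂ V
  have h : ρ.character = fun g => ((LinearMap.toMatrixAlgEquiv b).toMonoidHom.comp ρ g).trace :=
    funext fun g => LinearMap.trace_eq_matrix_trace ℂ b (ρ g)
  rw [h]
  exact isPosDefFun_trace_comp _

section ClassSums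

variable {G K : Type*} [Group G] [Fintype G] [Field K] [CharZero K] {f : G → K}

lemma sum_isConj_div_card_isConj (hf : ∀ g h, IsConj g h → f g = f h) (a : G) :
    ∑ g with IsConj g a, f g / #{x | IsConj g x} = f a := by
  have hcard {g : G} (hg : IsConj g a) : #{x | IsConj g x} = #{x | IsConj a x} := by
    congr 1; ext x; simp only [mem_filter, mem_univ, true_and]
    exact ⟨hg.symm.trans, hg.trans⟩
  have hcard' : #{g | IsConj g a} = #{x | IsConj a x} := by
    congr 1; ext x; simp only [mem_filter, mem_univ, true_and]
    exact isConj_comm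
  have hpos : (#{x | IsConj a x} : K) ≠ 0 :=
    Nat.cast_ne_zero.mpr (card_ne_zero.mpr ⟨a, mem_filter.mpr ⟨mem_univ a, IsConj.refl a⟩⟩)
  calc ∑ g with IsConj g a, f g / #{x | IsConj g x}
      = ∑ g with IsConj g a, f a / #{x | IsConj a x} :=
        sum_congr rfl fun g hg => by rw [hf g a (mem_filter.mp hg).2, hcard (mem_filter.mp hg).2]
    _ = f a := by rw [sum_const, hcard', nsmul_eq_mul, mul_div_cancel₀ _ hpos]

lemma sum_mul_card_isConj_div_card_isConj {ι : Type*} (S : Finset ι) (d : ι → G)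
    (hf : ∀ g h, IsConj g h → f g = f h) :
    ∑ g, f g * ((#{i ∈ S | IsConj g (d i)} : K) / #{x | IsConj g x}) = ∑ i ∈ S, f (d i) := by
  calc ∑ g, f g * ((#{i ∈ S | IsConj g (d i)} : K) / #{x | IsConj g x})
      = ∑ g, ∑ i ∈ S, if IsConj g (d i) then f g / #{x | IsConj g x} else 0 := by
        refine sum_congr rfl fun g _ => ?_
        rw [natCast_card_filter, sum_div, mul_sum]
        refine sum_congr rfl fun i _ => ?_
        split_ifs <;> simp only [mul_one_div, zero_div, mul_zero]
    _ = ∑ i ∈ S, f (d i) := by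
        rw [Finset.sum_comm]
        exact sum_congr rfl fun i _ => (sum_filter _ _).symm.trans (sum_isConj_div_card_isConj hf _)

end ClassSums

theorem stmt2_general {G : Type} [Group G] [Fintype G] (B : Finset G)
    (θ γ : G → ℕ)
    (hθ : ∀ g, θ g = ((B ×ˢ B).filter (fun p => IsConj g (p.1⁻¹ * p.2))).card)
    (hγ : ∀ g, γ g = (Finset.univ.filter (fun x => IsConj g x)).card)
    (V : FDRep ℂ G) :
    0 ≤ (1 / (Fintype.card G : ℂ)) *
        ∑ g : G, star (V.character g) * ((θ g : ℂ) / (γ g : ℂ)) := by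
  have hclass (g h : G) (hgh : IsConj g h) : star (V.character g) = star (V.character h) := by
    obtain ⟨c, rfl⟩ := isConj_iff.mp hgh
    rw [FDRep.char_conj]
  have hpos : 0 ≤ ∑ x ∈ B, ∑ y ∈ B, V.character (x⁻¹ * y) := by
    have h := Representation.isPosDefFun_character V.ρ B 1
    simp only [Pi.one_apply, star_one, one_mul] at h
    exact h
  simp only [hθ, hγ]
  rw [sum_mul_card_isConj_div_card_isConj (B ×ˢ B) (fun p => p.1⁻¹ * p.2) hclass]
  simp only [Finset.sum_product, ← star_sum]
  exact mul_nonneg (one_div_nonneg.mpr (Nat.cast_nonneg _)) (star_nonneg_iff.mpr hpos)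

/-- For a finite group `G`, a finite subset `B`, the difference-counting class function
`θ_B` (counting ordered pairs of `B` whose difference is conjugate to `g`) and `γ g` the
size of the conjugacy class of `g`, the inner product
`⟨χ, θ_B/γ⟩ = (1/|G|) ∑ g, conj (χ g) * θ_B g / γ g` with any irreducible character `χ`
is a nonnegative real number. -/
theorem stmt2 {G : Type} [Group G] [Fintype G] (B : Finset G)
    (θ γ : G → ℕ)
    (hθ : ∀ g, θ g = ((B ×ˢ B).filter (fun p => IsConj g (p.1⁻¹ * p.2))).card)
    (hγ : ∀ g, γ g = (Finset.univ.filter (fun x => IsConj g x)).card)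
    (V : FDRep ℂ G) (hV : CategoryTheory.Simple V) :
    0 ≤ (1 / (Fintype.card G : ℂ)) *
        ∑ g : G, star (V.character g) * ((θ g : ℂ) / (γ g : ℂ)) :=
  stmt2_general B θ γ hθ hγ V
end

section
/- Suppose real numbers x, y, z, v, a, b satisfy: x, y, z, v, a, b ≥ 0; x + y + z + v = 150; a + b = 720; 33·30 + 3x + y + z + v − 2a − 2b ≥ 0; 5·30 + 2x + 3y − z − a ≥ 0; and 9·30 + 3y + z − b ≥ 0. Then x = 150, y = z = v = 0, a = 450, b = 270. -/
/-- The linear system arising from the Delsarte bounds for a hypothetical affine plane of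
order 6 has the unique solution `x = 150, y = z = v = 0, a = 450, b = 270`. -/
theorem stmt6 (x y z v a b : ℝ)
    (hx : 0 ≤ x) (hy : 0 ≤ y) (hz : 0 ≤ z) (hv : 0 ≤ v) (ha : 0 ≤ a) (hb : 0 ≤ b)
    (h1 : x + y + z + v = 150) (h2 : a + b = 720)
    (h3 : 33 * 30 + 3 * x + y + z + v - 2 * a - 2 * b ≥ 0)
    (h4 : 5 * 30 + 2 * x + 3 * y - z - a ≥ 0)
    (h5 : 9 * 30 + 3 * y + z - b ≥ 0) :
    x = 150 ∧ y = 0 ∧ z = 0 ∧ v = 0 ∧ a = 450 ∧ b = 270 := by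
  have hx150 : x = 150 := by linarith
  have hy0 : y = 0 := by linarith
  have hz0 : z = 0 := by linarith
  have hv0 : v = 0 := by linarith
  have hb270 : b = 270 := by linarith
  exact ⟨hx150, hy0, hz0, hv0, by linarith, hb270⟩
end

section
/- There is no collection B of 30 permutations in S₆, partitioned into 5 blocks of 6, such that: (i) for σ ≠ τ in the same block, σ⁻¹τ has cycle type (3,3) (i.e., is a product of two disjoint 3-cycles), and (ii) for σ, τ in different blocks, σ⁻¹τ has exactly one fixed point, with exactly 450 of these cross-block differences being odd permutations. -/
open scoped Classical

open Finset

/-!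
Differences inside a block have cycle type `(3,3)`, hence are even, so all permutations of a
block share one sign. The sign of a cross-block difference then depends only on the two
blocks, and every ordered pair of blocks contributes `6 * 6 = 36` differences. So the number
of odd cross-block differences is a multiple of `36`, which `450` is not.
-/

namespace Equiv.Perm

variable {α : Type*} [Fintype α] [DecidableEq α]

theorem sign_eq_one_of_forall_mem_cycleType_odd {σ : Perm α} (h : ∀ n ∈ σ.cycleType, Odd n) :
    sign σ = 1 := by
  rw [sign_of_cycleType']
  refine Multiset.prod_eq_one fun u hu => ?_
  obtain ⟨n, hn, rfl⟩ := Multiset.mem_map.mp hu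
  rw [(h n hn).neg_one_pow, neg_neg]

theorem sign_eq_sign_of_cycleType_inv_mul_eq_three_three {σ τ : Perm α}
    (h : (σ⁻¹ * τ).cycleType = {3, 3}) : sign σ = sign τ := by
  have heven : sign (σ⁻¹ * τ) = 1 :=
    sign_eq_one_of_forall_mem_cycleType_odd (by rw [h]; decide)
  rwa [map_mul, map_inv, inv_mul_eq_one] at heven

theorem exists_sign_eq_of_cycleType_inv_mul_eq_three_three {ι κ : Type*} [Nonempty κ]
    (B : ι → κ → Perm α) (h : ∀ i j j', j ≠ j' → ((B i j)⁻¹ * B i j').cycleType = {3, 3}) :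
    ∃ s : ι → ℤˣ, ∀ i j, sign (B i j) = s i := by
  refine ⟨fun i => sign (B i (Classical.arbitrary κ)), fun i j => ?_⟩
  by_cases hj : j = Classical.arbitrary κ
  · rw [hj]
  · exact (sign_eq_sign_of_cycleType_inv_mul_eq_three_three (h i _ _ (Ne.symm hj))).symm

end Equiv.Perm

theorem card_filter_prod_prod_of_fst {ι κ : Type*} [Fintype ι] [Fintype κ] {P : ι → ι → Prop}
    [DecidablePred fun x : (ι × κ) × ι × κ => P x.1.1 x.2.1] :
    #{x : (ι × κ) × ι × κ | P x.1.1 x.2.1} = #{p : ι × ι | P p.1 p.2} * Fintype.card κ ^ 2 := by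
  rw [sq, ← Fintype.card_prod, ← card_univ, ← card_product,
    ← card_map (Equiv.prodProdProdComm ι ι κ κ).toEmbedding]
  congr 1
  ext x
  simp [Equiv.prodProdProdComm]

/-- There is no collection of 30 permutations in `S₆`, arranged in 5 blocks of 6,
such that differences within a block have cycle type `(3,3)`, differences across blocks
have exactly one fixed point, and exactly 450 of the cross-block differences are odd. -/
theorem stmt9 :
    ¬ ∃ B : Fin 5 → Fin 6 → Equiv.Perm (Fin 6),
      Function.Injective (fun x : Fin 5 × Fin 6 => B x.1 x.2) ∧
      (∀ i j j', j ≠ j' → ((B i j)⁻¹ * B i j').cycleType = {3, 3}) ∧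
      (∀ i i' j j', i ≠ i' →
        (Finset.univ.filter (fun x : Fin 6 => ((B i j)⁻¹ * B i' j') x = x)).card = 1) ∧
      (Finset.univ.filter
          (fun x : (Fin 5 × Fin 6) × Fin 5 × Fin 6 =>
            x.1.1 ≠ x.2.1 ∧
              Equiv.Perm.sign ((B x.1.1 x.1.2)⁻¹ * B x.2.1 x.2.2) = -1)).card = 450 := by
  rintro ⟨B, -, hblock, -, hcount⟩
  obtain ⟨s, hs⟩ := Equiv.Perm.exists_sign_eq_of_cycleType_inv_mul_eq_three_three B hblock
  simp only [map_mul, map_inv, hs] at hcount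
  rw [card_filter_prod_prod_of_fst (P := fun i i' => i ≠ i' ∧ (s i)⁻¹ * s i' = -1),
    Fintype.card_fin] at hcount
  omega
end
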